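/- arXiv:1107.1327 — 5 statements merged into one kernel-verified Lean document; each statement's English description precedes it below -/
import Mathlib

section
/- For all p ≥ 1, the polynomials P_{2p-1} and P_{2p} both have degree p, where P_n are defined by P_0 = 0, P_1(m) = m, and P_{n+1}(m) = P_n(m+1) + Σ_{k=1}^{n-1} P_k(m)·P_{n-k}(m). -/
/-!
In an ordered semiring, a sum of polynomials with nonnegative leading coefficients has no
cancellation at the top, so its degree is the maximum of the degrees. By induction every `P n`
with `n ≥ 1` has nonnegative leading coefficient, and the recursion gives
`deg P (n + 1) = max (deg P n) (max_k (deg P k + deg P (n - k)))`, which `⌈n / 2⌉` satisfies: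
the shift term attains `⌈(n + 1) / 2⌉` for odd `n`, the summand `k = 1` for even `n`.
-/

open Polynomial

namespace Polynomial

variable {R : Type*} [Semiring R] [PartialOrder R] [IsOrderedAddMonoid R]

theorem natDegree_add_eq_max_of_leadingCoeff_nonneg {p q : R[X]} (hp : 0 ≤ p.leadingCoeff)
    (hq : 0 ≤ q.leadingCoeff) :
    (p + q).natDegree = max p.natDegree q.natDegree ∧ 0 ≤ (p + q).leadingCoeff := by
  wlog hpq : p.degree ≤ q.degree generalizing p q
  · simpa only [add_comm p, max_comm] using this hq hp (le_of_not_ge hpq)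
  rcases hpq.lt_or_eq with hlt | heq
  · rw [natDegree_add_eq_right_of_degree_lt hlt, leadingCoeff_add_of_degree_lt hlt,
      max_eq_right (natDegree_le_natDegree hlt.le)]
    exact ⟨rfl, hq⟩
  by_cases hlc : p.leadingCoeff + q.leadingCoeff = 0
  · obtain ⟨hp0, hq0⟩ := (add_eq_zero_iff_of_nonneg hp hq).1 hlc
    simp [leadingCoeff_eq_zero.1 hp0, leadingCoeff_eq_zero.1 hq0]
  refine ⟨?_, leadingCoeff_add_of_degree_eq heq hlc ▸ add_nonneg hp hq⟩
  rw [natDegree_eq_of_degree_eq heq, max_self]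
  apply natDegree_eq_of_degree_eq
  rw [degree_add_eq_of_leadingCoeff_add_ne_zero hlc, heq, max_self]

theorem natDegree_sum_eq_sup_of_leadingCoeff_nonneg {ι : Type*} (s : Finset ι) (f : ι → R[X])
    (hf : ∀ i ∈ s, 0 ≤ (f i).leadingCoeff) :
    (∑ i ∈ s, f i).natDegree = s.sup (fun i ↦ (f i).natDegree) ∧
      0 ≤ (∑ i ∈ s, f i).leadingCoeff := by
  classical
  induction s using Finset.induction_on with
  | empty => simp
  | insert i s hi ih =>
    rw [Finset.forall_mem_insert] at hf
    obtain ⟨hdeg, hlc⟩ := ih hf.2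
    rw [Finset.sum_insert hi, Finset.sup_insert, ← hdeg]
    exact natDegree_add_eq_max_of_leadingCoeff_nonneg hf.1 hlc

end Polynomial

theorem max_div_two_sup_Icc_eq {n : ℕ} (hn : 1 ≤ n) :
    max ((n + 1) / 2) ((Finset.Icc 1 (n - 1)).sup fun k ↦ (k + 1) / 2 + (n - k + 1) / 2) =
      (n + 2) / 2 := by
  refine le_antisymm (max_le (by omega) (Finset.sup_le fun k hk ↦ ?_)) ?_
  · rw [Finset.mem_Icc] at hk
    omega
  rcases hn.eq_or_lt with rfl | hn
  · exact le_max_left _ _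
  · refine le_max_of_le_right (le_trans ?_ (Finset.le_sup (f := fun k ↦ (k + 1) / 2 + (n - k + 1) / 2)
      (Finset.mem_Icc.2 ⟨le_rfl, by omega⟩ : 1 ∈ Finset.Icc 1 (n - 1))))
    omega

section Recursion

variable {P : ℕ → ℤ[X]}

theorem natDegree_succ_eq_and_leadingCoeff_nonneg
    (hPrec : ∀ n, 1 ≤ n →
      P (n + 1) = (P n).comp (X + 1) + ∑ k ∈ Finset.Icc 1 (n - 1), P k * P (n - k))
    {n : ℕ} (hn : 1 ≤ n)
    (ih : ∀ k, 1 ≤ k → k ≤ n → (P k).natDegree = (k + 1) / 2 ∧ 0 ≤ (P k).leadingCoeff) :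
    (P (n + 1)).natDegree = (n + 2) / 2 ∧ 0 ≤ (P (n + 1)).leadingCoeff := by
  have hcomp : ((P n).comp (X + 1)).natDegree = (n + 1) / 2 ∧
      0 ≤ ((P n).comp (X + 1)).leadingCoeff := by
    rw [← C_1, ← taylor_apply, natDegree_taylor, leadingCoeff_taylor]
    exact ih n hn le_rfl
  have hprod : ∀ k ∈ Finset.Icc 1 (n - 1),
      (P k * P (n - k)).natDegree = (k + 1) / 2 + (n - k + 1) / 2 ∧
        0 ≤ (P k * P (n - k)).leadingCoeff := by
    intro k hk
    rw [Finset.mem_Icc] at hk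
    obtain ⟨hdk, hlck⟩ := ih k hk.1 (by omega)
    obtain ⟨hdnk, hlcnk⟩ := ih (n - k) (by omega) (by omega)
    rw [natDegree_mul (ne_zero_of_natDegree_gt (n := 0) (by omega))
      (ne_zero_of_natDegree_gt (n := 0) (by omega)), leadingCoeff_mul, hdk, hdnk]
    exact ⟨rfl, mul_nonneg hlck hlcnk⟩
  obtain ⟨hsum, hsumlc⟩ :=
    natDegree_sum_eq_sup_of_leadingCoeff_nonneg _ _ fun k hk ↦ (hprod k hk).2
  rw [Finset.sup_congr rfl fun k hk ↦ (hprod k hk).1] at hsum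
  rw [hPrec n hn, ← max_div_two_sup_Icc_eq hn, ← hcomp.1, ← hsum]
  exact natDegree_add_eq_max_of_leadingCoeff_nonneg hcomp.2 hsumlc

theorem natDegree_eq_and_leadingCoeff_nonneg (hP1 : P 1 = X)
    (hPrec : ∀ n, 1 ≤ n →
      P (n + 1) = (P n).comp (X + 1) + ∑ k ∈ Finset.Icc 1 (n - 1), P k * P (n - k)) :
    ∀ n, 1 ≤ n → (P n).natDegree = (n + 1) / 2 ∧ 0 ≤ (P n).leadingCoeff := by
  intro n
  induction n using Nat.strong_induction_on with
  | _ n ih =>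
    match n with
    | 0 => omega
    | 1 => simp [hP1]
    | n + 2 =>
      exact fun _ ↦ natDegree_succ_eq_and_leadingCoeff_nonneg hPrec (by omega)
        fun k hk hkn ↦ ih k (by omega) hk

end Recursion

theorem degree_of_P_general
    (P : ℕ → Polynomial ℤ)
    (hP1 : P 1 = X)
    (hPrec : ∀ n, 1 ≤ n →
      P (n + 1) = (P n).comp (X + 1) + ∑ k ∈ Finset.Icc 1 (n - 1), P k * P (n - k)) :
    ∀ p, 1 ≤ p → (P (2 * p - 1)).natDegree = p ∧ (P (2 * p)).natDegree = p := by
  intro p hp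
  have hdeg := natDegree_eq_and_leadingCoeff_nonneg hP1 hPrec
  rw [(hdeg (2 * p - 1) (by omega)).1, (hdeg (2 * p) (by omega)).1]
  omega

theorem degree_of_P
    (P : ℕ → Polynomial ℤ)
    (hP0 : P 0 = 0)
    (hP1 : P 1 = X)
    (hPrec : ∀ n, 1 ≤ n →
      P (n + 1) = (P n).comp (X + 1) + ∑ k ∈ Finset.Icc 1 (n - 1), P k * P (n - k)) :
    ∀ p, 1 ≤ p → (P (2 * p - 1)).natDegree = p ∧ (P (2 * p)).natDegree = p :=
  degree_of_P_general P hP1 hPrec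
end

section
/- The leading coefficient θ_{2q+1} of P_{2q+1} equals the Catalan number C_q = (1/(q+1))·binom(2q,q), for all q ≥ 0. -/
/-!
Write `θ_q` for the coefficient of `m^{q+1}` in `P_{2q+1}`. Since `deg P_n ≤ ⌊(n+1)/2⌋`, the shift
`P_{2q+2}(m+1)` has degree `≤ q+1` and does not reach `m^{q+2}` in `P_{2q+3}`; in the convolution
`Σ P_k P_{2q+2-k}` the terms with `k` even have degree `≤ q+1` as well, while those with `k = 2i+1`
contribute exactly `θ_i θ_{q-i}`. So `θ_{q+1} = Σ_{i ≤ q} θ_i θ_{q-i}` and `θ_0 = 1`: Segner's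
recurrence of the Catalan numbers.
-/

open Polynomial

theorem Polynomial.natDegree_comp_X_add_one_le {R : Type*} [Semiring R] (p : R[X]) :
    (p.comp (X + 1)).natDegree ≤ p.natDegree :=
  natDegree_comp_le.trans <| (Nat.mul_le_mul_left _ <|
    natDegree_add_le_of_degree_le natDegree_X_le (natDegree_one.trans_le zero_le_one)).trans_eq
      (mul_one _)

theorem Finset.sum_Icc_one_two_mul_add_one {M : Type*} [AddCommMonoid M] (f : ℕ → M) (q : ℕ) :
    ∑ k ∈ Icc 1 (2 * q + 1), f k =
      ∑ i ∈ range (q + 1), f (2 * i + 1) + ∑ i ∈ range q, f (2 * i + 2) := by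
  induction q with
  | zero => simp
  | succ q ih =>
    rw [show 2 * (q + 1) + 1 = 2 * q + 1 + 1 + 1 by ring, sum_Icc_succ_top (by omega),
      sum_Icc_succ_top (by omega), ih,
      sum_range_succ (fun i => f (2 * i + 1)) (q + 1),
      sum_range_succ (fun i => f (2 * i + 2)) q]
    ring_nf
    abel

section Recurrence

variable {P : ℕ → ℤ[X]} (hP1 : P 1 = X)
  (hPrec : ∀ n, 1 ≤ n →
    P (n + 1) = (P n).comp (X + 1) + ∑ k ∈ Finset.Icc 1 (n - 1), P k * P (n - k))
include hP1 hPrec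

theorem natDegree_le_succ_div_two (n : ℕ) (hn : n ≠ 0) : (P n).natDegree ≤ (n + 1) / 2 := by
  induction n using Nat.strong_induction_on with
  | _ n ih =>
    match n, ih with
    | 1, _ => simp [hP1]
    | n + 2, ih =>
      rw [hPrec (n + 1) (by omega)]
      refine (natDegree_add_le _ _).trans (max_le ?shift ?convolution)
      case shift =>
        exact (natDegree_comp_X_add_one_le _).trans ((ih (n + 1) (by omega) (by omega)).trans
          (by omega))
      case convolution =>
        refine natDegree_sum_le_of_forall_le _ _ fun k hk => natDegree_mul_le.trans ?_
        rw [Finset.mem_Icc] at hk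
        have hk_deg := ih k (by omega) (by omega)
        have hk'_deg := ih (n + 1 - k) (by omega) (by omega)
        omega

theorem coeff_odd_eq_catalan (q : ℕ) : (P (2 * q + 1)).coeff (q + 1) = catalan q := by
  have hdeg := natDegree_le_succ_div_two hP1 hPrec
  induction q using Nat.strong_induction_on with
  | _ q ih =>
    match q, ih with
    | 0, _ => simp [hP1]
    | q + 1, ih =>
      have hshift : ((P (2 * q + 2)).comp (X + 1)).coeff (q + 2) = 0 :=
        coeff_eq_zero_of_natDegree_lt <|
          (natDegree_comp_X_add_one_le _).trans_lt ((hdeg _ (by omega)).trans_lt (by omega))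
      have hodd : ∀ i ∈ Finset.range (q + 1),
          (P (2 * i + 1) * P (2 * q + 2 - (2 * i + 1))).coeff (q + 2) =
            (catalan i * catalan (q - i) : ℕ) := by
        intro i hi
        rw [Finset.mem_range] at hi
        rw [show 2 * q + 2 - (2 * i + 1) = 2 * (q - i) + 1 by omega,
          show q + 2 = (i + 1) + (q - i + 1) by omega,
          coeff_mul_add_eq_of_natDegree_le ((hdeg _ (by omega)).trans (by omega))
            ((hdeg _ (by omega)).trans (by omega)),
          ih i (by omega), ih (q - i) (by omega), Nat.cast_mul]
      have heven : ∀ i ∈ Finset.range q,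
          (P (2 * i + 2) * P (2 * q + 2 - (2 * i + 2))).coeff (q + 2) = 0 := by
        intro i hi
        rw [Finset.mem_range] at hi
        have hi_deg := hdeg (2 * i + 2) (by omega)
        have hi'_deg := hdeg (2 * q + 2 - (2 * i + 2)) (by omega)
        exact coeff_eq_zero_of_natDegree_lt (natDegree_mul_le.trans_lt (by omega))
      rw [show 2 * (q + 1) + 1 = 2 * q + 2 + 1 by ring, hPrec _ (by omega), coeff_add, hshift,
        zero_add, finsetSum_coeff, show 2 * q + 2 - 1 = 2 * q + 1 by omega,
        Finset.sum_Icc_one_two_mul_add_one,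
        Finset.sum_congr rfl hodd, Finset.sum_eq_zero heven, add_zero, catalan_succ,
        Fin.sum_univ_eq_sum_range (fun i => catalan i * catalan (q - i)), Nat.cast_sum]

end Recurrence

theorem leading_coeff_odd_is_catalan_general
    (P : ℕ → Polynomial ℤ)
    (hP1 : P 1 = X)
    (hPrec : ∀ n, 1 ≤ n →
      P (n + 1) = (P n).comp (X + 1) + ∑ k ∈ Finset.Icc 1 (n - 1), P k * P (n - k)) :
    ∀ q : ℕ, (P (2 * q + 1)).coeff (q + 1) = catalan q ∧
      (q + 1) * catalan q = Nat.choose (2 * q) q :=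
  fun q => ⟨coeff_odd_eq_catalan hP1 hPrec q, succ_mul_catalan_eq_centralBinom q⟩

theorem leading_coeff_odd_is_catalan
    (P : ℕ → Polynomial ℤ)
    (hP0 : P 0 = 0)
    (hP1 : P 1 = X)
    (hPrec : ∀ n, 1 ≤ n →
      P (n + 1) = (P n).comp (X + 1) + ∑ k ∈ Finset.Icc 1 (n - 1), P k * P (n - k)) :
    ∀ q : ℕ, (P (2 * q + 1)).coeff (q + 1) = catalan q ∧
      (q + 1) * catalan q = Nat.choose (2 * q) q :=
  leading_coeff_odd_is_catalan_general P hP1 hPrec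
end

section
/- The leading coefficients θ_{2q+1} of the odd-indexed polynomials P_{2q+1} satisfy θ_1 = 1 and θ_{2q+1} = Σ_{h=0}^{q-1} θ_{2h+1}·θ_{2q-2h-1} for q ≥ 1, hence coincide with the Catalan numbers. -/
/-!
Since `P₁ = X`, the shift `p ↦ p(X + 1)` preserves degrees and degrees add in products,
induction gives `deg Pₙ ≤ ⌈n/2⌉`. In degree `q + 1` of
`P_{2q+1} = P_{2q}(X + 1) + ∑ Pₖ P_{2q-k}`, the shift term has too small a degree, and so do
the products with `k` even; each product with `k = 2h + 1` odd contributes exactly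
`θ_{2h+1} θ_{2q-2h-1}`. This is the Catalan recurrence, with `θ₁ = 1`.
-/

open Polynomial Finset

theorem eq_catalan_of_sum_mul {R : Type*} [Semiring R] {θ : ℕ → R} (h0 : θ 0 = 1)
    (hrec : ∀ q, 1 ≤ q → θ q = ∑ h ∈ range q, θ h * θ (q - 1 - h)) (q : ℕ) :
    θ q = catalan q := by
  induction q using Nat.strong_induction_on with
  | _ q ih =>
    obtain _ | r := q
    · simpa using h0
    · rw [hrec (r + 1) (by omega), catalan_succ, Fin.sum_univ_eq_sum_range
        (fun i => catalan i * catalan (r - i)) (r + 1)]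
      push_cast
      refine sum_congr rfl fun h hh => ?_
      rw [mem_range] at hh
      rw [ih h (by omega), ih (r - h) (by omega)]

section

variable {R : Type*} [CommSemiring R] {P : ℕ → R[X]}

theorem natDegree_comp_X_add_one (p : R[X]) : (p.comp (X + 1)).natDegree = p.natDegree := by
  simpa [taylor_apply] using natDegree_taylor p 1

theorem natDegree_le_of_rec (hP1 : (P 1).natDegree ≤ 1)
    (hPrec : ∀ n, 1 ≤ n →
      P (n + 1) = (P n).comp (X + 1) + ∑ k ∈ Icc 1 (n - 1), P k * P (n - k))
    {n : ℕ} (hn : 1 ≤ n) : (P n).natDegree ≤ (n + 1) / 2 := by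
  induction n using Nat.strong_induction_on with
  | _ n ih =>
    obtain _ | _ | m := n
    · omega
    · simpa using hP1
    · rw [hPrec (m + 1) (by omega)]
      refine (natDegree_add_le _ _).trans (max_le ?_ ?_)
      · rw [natDegree_comp_X_add_one]
        exact (ih (m + 1) (by omega) (by omega)).trans (by omega)
      · refine natDegree_sum_le_of_forall_le _ _ fun k hk => natDegree_mul_le.trans ?_
        rw [mem_Icc] at hk
        have hdk := ih k (by omega) (by omega)
        have hdmk := ih (m + 1 - k) (by omega) (by omega)
        omega

variable (hdeg : ∀ n, 1 ≤ n → (P n).natDegree ≤ (n + 1) / 2)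
include hdeg

theorem coeff_mul_even_eq_zero {a q : ℕ} (ha : 1 ≤ a) (haq : a < q) :
    (P (2 * a) * P (2 * q - 2 * a)).coeff (q + 1) = 0 := by
  refine coeff_eq_zero_of_natDegree_lt (natDegree_mul_le.trans_lt ?_)
  have h1 := hdeg (2 * a) (by omega)
  have h2 := hdeg (2 * q - 2 * a) (by omega)
  omega

theorem coeff_mul_odd {h q : ℕ} (hq : h < q) :
    (P (2 * h + 1) * P (2 * q - (2 * h + 1))).coeff (q + 1) =
      (P (2 * h + 1)).coeff (h + 1) * (P (2 * (q - 1 - h) + 1)).coeff (q - 1 - h + 1) := by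
  have e1 : (P (2 * h + 1)).natDegree ≤ h + 1 := (hdeg _ (by omega)).trans (by omega)
  have e2 : (P (2 * q - (2 * h + 1))).natDegree ≤ q - h :=
    (hdeg _ (by omega)).trans (by omega)
  rw [show q + 1 = (h + 1) + (q - h) by omega, coeff_mul_add_eq_of_natDegree_le e1 e2,
    show 2 * q - (2 * h + 1) = 2 * (q - 1 - h) + 1 by omega, show q - h = q - 1 - h + 1 by omega]

theorem coeff_sum_mul_eq_sum_odd (q : ℕ) :
    (∑ k ∈ Icc 1 (2 * q - 1), P k * P (2 * q - k)).coeff (q + 1) =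
      ∑ h ∈ range q,
        (P (2 * h + 1)).coeff (h + 1) * (P (2 * (q - 1 - h) + 1)).coeff (q - 1 - h + 1) := by
  have hodd : (range q).image (fun h => 2 * h + 1) ⊆ Icc 1 (2 * q - 1) := by
    intro k hk
    simp only [mem_image, mem_range] at hk
    obtain ⟨h, hh, rfl⟩ := hk
    rw [mem_Icc]
    omega
  rw [finsetSum_coeff, ← sum_subset hodd, sum_image (fun a _ b _ hab => by omega)]
  · exact sum_congr rfl fun h hh => coeff_mul_odd hdeg (mem_range.mp hh)
  · intro k hk hk_odd
    simp only [mem_image, mem_range, not_exists, not_and] at hk_odd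
    rw [mem_Icc] at hk
    obtain ⟨a, rfl⟩ : Even k := Nat.not_odd_iff_even.mp fun ⟨h, hh⟩ =>
      hk_odd h (by omega) hh.symm
    rw [← two_mul]
    exact coeff_mul_even_eq_zero hdeg (by omega) (by omega)

theorem coeff_odd_eq_sum_odd
    (hPrec : ∀ n, 1 ≤ n →
      P (n + 1) = (P n).comp (X + 1) + ∑ k ∈ Icc 1 (n - 1), P k * P (n - k))
    {q : ℕ} (hq : 1 ≤ q) :
    (P (2 * q + 1)).coeff (q + 1) =
      ∑ h ∈ range q,
        (P (2 * h + 1)).coeff (h + 1) * (P (2 * (q - 1 - h) + 1)).coeff (q - 1 - h + 1) := by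
  have hshift : ((P (2 * q)).comp (X + 1)).coeff (q + 1) = 0 := by
    refine coeff_eq_zero_of_natDegree_lt ?_
    have := hdeg (2 * q) (by omega)
    rw [natDegree_comp_X_add_one]
    omega
  rw [hPrec (2 * q) (by omega), coeff_add, hshift, zero_add, coeff_sum_mul_eq_sum_odd hdeg]

end

theorem leading_coeff_odd_recurrence_general
    (P : ℕ → Polynomial ℤ)
    (hP1 : P 1 = X)
    (hPrec : ∀ n, 1 ≤ n →
      P (n + 1) = (P n).comp (X + 1) + ∑ k ∈ Finset.Icc 1 (n - 1), P k * P (n - k)) :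
    (P 1).coeff 1 = 1 ∧
    (∀ q, 1 ≤ q →
      (P (2 * q + 1)).coeff (q + 1) =
        ∑ h ∈ Finset.range q,
          (P (2 * h + 1)).coeff (h + 1) * (P (2 * (q - 1 - h) + 1)).coeff (q - 1 - h + 1)) ∧
    (∀ q, (P (2 * q + 1)).coeff (q + 1) = catalan q) := by
  have hdeg : ∀ n, 1 ≤ n → (P n).natDegree ≤ (n + 1) / 2 := fun n =>
    natDegree_le_of_rec (by rw [hP1]; exact natDegree_X_le) hPrec
  have hθ1 : (P 1).coeff 1 = 1 := by rw [hP1, coeff_X_one]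
  have hrec := fun q (hq : 1 ≤ q) => coeff_odd_eq_sum_odd hdeg hPrec hq
  exact ⟨hθ1, hrec, eq_catalan_of_sum_mul (θ := fun q => (P (2 * q + 1)).coeff (q + 1)) hθ1 hrec⟩

theorem leading_coeff_odd_recurrence
    (P : ℕ → Polynomial ℤ)
    (hP0 : P 0 = 0)
    (hP1 : P 1 = X)
    (hPrec : ∀ n, 1 ≤ n →
      P (n + 1) = (P n).comp (X + 1) + ∑ k ∈ Finset.Icc 1 (n - 1), P k * P (n - k)) :
    (P 1).coeff 1 = 1 ∧
    (∀ q, 1 ≤ q →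
      (P (2 * q + 1)).coeff (q + 1) =
        ∑ h ∈ Finset.range q,
          (P (2 * h + 1)).coeff (h + 1) * (P (2 * (q - 1 - h) + 1)).coeff (q - 1 - h + 1)) ∧
    (∀ q, (P (2 * q + 1)).coeff (q + 1) = catalan q) :=
  leading_coeff_odd_recurrence_general P hP1 hPrec
end

section
/- The leading coefficient θ_{2q} of P_{2q} (the coefficient of m^q) equals binom(2q-1, q) for all q ≥ 1. -/
/-!
By strong induction, `P n` has degree at most `⌈n/2⌉ = (n + 1) / 2`, and only the terms of that
top degree matter for its coefficient `θ_n` there. The shift `m ↦ m + 1` keeps the top coefficient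
and contributes only when `n` is odd; the product `P_k P_{n-k}` reaches the top degree of `P_{n+1}`
exactly when `n` or `k` is odd. The resulting recursion for `θ` is solved by `θ_{2j+1} = C_j`
(Catalan) and `θ_{2q} = binom(2q-1, q)`: at odd indices it is the Catalan recursion, and at even
indices, after pairing `k` with `2q + 1 - k`, it becomes `∑ binom(2i, i) C_{q-i} = binom(2q+1, q)`,
which follows from `binom(2i, i) = (i + 1) C_i` by symmetrizing the convolution.
-/

open Polynomial Finset

namespace Polynomial

variable {R : Type*} [CommSemiring R]

theorem coeff_eq_ite_of_natDegree_le {p : R[X]} {m n : ℕ} (hp : p.natDegree ≤ m) (hmn : m ≤ n) :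
    p.coeff n = if m = n then p.coeff m else 0 := by
  split_ifs with h
  · rw [h]
  · exact coeff_eq_zero_of_natDegree_lt (by omega)

theorem coeff_taylor_of_natDegree_le {p : R[X]} {m : ℕ} (r : R) (hp : p.natDegree ≤ m) :
    (taylor r p).coeff m = p.coeff m := by
  rcases hp.lt_or_eq with hlt | rfl
  · rw [coeff_eq_zero_of_natDegree_lt hlt,
      coeff_eq_zero_of_natDegree_lt ((natDegree_taylor p r).trans_lt hlt)]
  · simpa only [leadingCoeff, natDegree_taylor] using leadingCoeff_taylor (r := r) (f := p)

end Polynomial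

theorem Nat.two_mul_choose_succ_eq_centralBinom (q : ℕ) :
    2 * (2 * q + 1).choose (q + 1) = (q + 1).centralBinom := by
  rw [Nat.centralBinom_eq_two_mul_choose, show 2 * (q + 1) = 2 * q + 1 + 1 by ring,
    Nat.choose_succ_succ' (2 * q + 1) q, Nat.choose_symm_half, two_mul]

theorem two_mul_sum_centralBinom_mul_catalan (n : ℕ) :
    2 * ∑ i ∈ range (n + 1), i.centralBinom * catalan (n - i) = (n + 1).centralBinom := by
  rw [← Nat.sum_antidiagonal_eq_sum_range_succ (fun i j => i.centralBinom * catalan j), two_mul]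
  nth_rewrite 2 [← Nat.sum_antidiagonal_swap]
  rw [← sum_add_distrib, ← succ_mul_catalan_eq_centralBinom, catalan_succ', mul_sum]
  refine sum_congr rfl fun ij hij => ?_
  rw [HasAntidiagonal.mem_antidiagonal] at hij
  simp only [Prod.fst_swap, Prod.snd_swap, ← succ_mul_catalan_eq_centralBinom, ← hij]
  ring

/-- Closed form of `θ_n`, the coefficient of `m ^ ⌈n/2⌉` in `P_n` (for `n ≥ 1`). -/
def theta (n : ℕ) : ℕ := if n % 2 = 1 then catalan (n / 2) else (n - 1).choose (n / 2)

theorem theta_two_mul_add_one (j : ℕ) : theta (2 * j + 1) = catalan j := by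
  rw [theta, if_pos (by omega), show (2 * j + 1) / 2 = j by omega]

theorem theta_two_mul (q : ℕ) : theta (2 * q) = (2 * q - 1).choose q := by
  rw [theta, if_neg (by omega), show 2 * q / 2 = q by omega]

theorem catalan_succ_eq_sum_theta (q : ℕ) :
    catalan (q + 1) =
      ∑ k ∈ Icc 1 (2 * q + 1), if k % 2 = 1 then theta k * theta (2 * q + 2 - k) else 0 := by
  rw [← sum_filter, catalan_succ',
    Nat.sum_antidiagonal_eq_sum_range_succ (fun i j => catalan i * catalan j)]
  refine sum_nbij' (fun j => 2 * j + 1) (fun k => k / 2) ?_ ?_ ?_ ?_ ?_ <;>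
    intro j hj <;> simp only [mem_range, mem_filter, mem_Icc] at hj ⊢
  · omega
  · omega
  · omega
  · omega
  · rw [show 2 * q + 2 - (2 * j + 1) = 2 * (q - j) + 1 by omega, theta_two_mul_add_one,
      theta_two_mul_add_one]

theorem theta_two_mul_add_two (q : ℕ) :
    theta (2 * q + 2) = catalan q + ∑ k ∈ Icc 1 (2 * q), theta k * theta (2 * q + 1 - k) := by
  let f k := theta k * theta (2 * q + 1 - k)
  have hreflect : ∑ k ∈ (Icc 1 (2 * q)).filter (fun k => k % 2 = 1), f k
      = ∑ k ∈ (Icc 1 (2 * q)).filter (fun k => ¬ k % 2 = 1), f k := by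
    refine sum_nbij' (fun k => 2 * q + 1 - k) (fun k => 2 * q + 1 - k) ?_ ?_ ?_ ?_ ?_ <;>
      intro k hk <;> simp only [mem_filter, mem_Icc] at hk ⊢
    · omega
    · omega
    · omega
    · omega
    · simp only [f]
      rw [show 2 * q + 1 - (2 * q + 1 - k) = k by omega, mul_comm]
  have heven : ∑ k ∈ (Icc 1 (2 * q)).filter (fun k => ¬ k % 2 = 1), f k
      = ∑ i ∈ range q, (2 * i + 1).choose (i + 1) * catalan (q - (i + 1)) := by
    refine sum_nbij' (fun k => k / 2 - 1) (fun i => 2 * i + 2) ?_ ?_ ?_ ?_ ?_ <;>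
      intro k hk <;> simp only [mem_range, mem_filter, mem_Icc] at hk ⊢
    · omega
    · omega
    · omega
    · omega
    · obtain ⟨i, rfl⟩ : ∃ i, k = 2 * (i + 1) := ⟨k / 2 - 1, by omega⟩
      simp only [f]
      rw [show 2 * q + 1 - 2 * (i + 1) = 2 * (q - (i + 1)) + 1 by omega, theta_two_mul,
        theta_two_mul_add_one, show 2 * (i + 1) - 1 = 2 * i + 1 by omega,
        show 2 * (i + 1) / 2 - 1 = i by omega]
  refine Nat.eq_of_mul_eq_mul_left two_pos ?_
  calc 2 * theta (2 * q + 2)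
      = (q + 1).centralBinom := by
        rw [show 2 * q + 2 = 2 * (q + 1) by ring, theta_two_mul,
          show 2 * (q + 1) - 1 = 2 * q + 1 by omega, Nat.two_mul_choose_succ_eq_centralBinom]
    _ = 2 * ∑ i ∈ range (q + 1), i.centralBinom * catalan (q - i) :=
        (two_mul_sum_centralBinom_mul_catalan q).symm
    _ = 2 * (catalan q + ∑ k ∈ Icc 1 (2 * q), f k) := by
        rw [← sum_filter_add_sum_filter_not (Icc 1 (2 * q)) (fun k => k % 2 = 1), hreflect, heven,
          sum_range_succ']
        simp only [← Nat.two_mul_choose_succ_eq_centralBinom, Nat.centralBinom_zero,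
          Nat.sub_zero, one_mul, mul_assoc, ← mul_sum]
        ring

theorem theta_succ (n : ℕ) (hn : 1 ≤ n) :
    theta (n + 1) = (if (n + 1) / 2 = (n + 2) / 2 then theta n else 0) +
      ∑ k ∈ Icc 1 (n - 1),
        if (k + 1) / 2 + (n - k + 1) / 2 = (n + 2) / 2 then theta k * theta (n - k) else 0 := by
  obtain ⟨q, rfl | rfl⟩ : ∃ q, n = 2 * q + 2 ∨ n = 2 * q + 1 := ⟨(n - 1) / 2, by omega⟩
  · rw [if_neg (by omega), zero_add, show 2 * q + 2 + 1 = 2 * (q + 1) + 1 by ring,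
      theta_two_mul_add_one, catalan_succ_eq_sum_theta]
    refine sum_congr rfl fun k hk => ?_
    simp only [mem_Icc] at hk
    by_cases hodd : k % 2 = 1
    · rw [if_pos hodd, if_pos (by omega)]
    · rw [if_neg hodd, if_neg (by omega)]
  · rw [if_pos (by omega), theta_two_mul_add_one, theta_two_mul_add_two]
    refine congrArg _ (sum_congr (by congr 1) fun k hk => ?_)
    simp only [mem_Icc] at hk
    rw [if_pos (by omega)]

theorem natDegree_le_and_coeff_eq_theta (P : ℕ → ℤ[X]) (hP1 : P 1 = X)
    (hPrec : ∀ n, 1 ≤ n →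
      P (n + 1) = (P n).comp (X + 1) + ∑ k ∈ Icc 1 (n - 1), P k * P (n - k))
    (n : ℕ) (hn : 1 ≤ n) :
    (P n).natDegree ≤ (n + 1) / 2 ∧ (P n).coeff ((n + 1) / 2) = theta n := by
  induction n using Nat.strong_induction_on with
  | _ n ih =>
  obtain ⟨n, rfl | ⟨rfl, hn₁⟩⟩ : ∃ m, n = 1 ∨ n = m + 1 ∧ 1 ≤ m := ⟨n - 1, by omega⟩
  · simp [hP1, theta, catalan_zero]
  have hshift : (P n).comp (X + 1) = taylor 1 (P n) := by rw [taylor_apply, C_1]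
  obtain ⟨hdeg, hcoeff⟩ := ih n (by omega) hn₁
  have hdeg_taylor : (taylor 1 (P n)).natDegree ≤ (n + 1) / 2 :=
    (natDegree_taylor _ _).trans_le hdeg
  have hprod : ∀ k ∈ Icc 1 (n - 1),
      (P k * P (n - k)).natDegree ≤ (k + 1) / 2 + (n - k + 1) / 2 ∧
        (P k * P (n - k)).coeff ((n + 2) / 2) =
          if (k + 1) / 2 + (n - k + 1) / 2 = (n + 2) / 2 then theta k * theta (n - k) else 0 := by
    intro k hk
    rw [mem_Icc] at hk
    obtain ⟨hdeg_k, hcoeff_k⟩ := ih k (by omega) (by omega)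
    obtain ⟨hdeg_nk, hcoeff_nk⟩ := ih (n - k) (by omega) (by omega)
    have hdeg_mul := natDegree_mul_le_of_le hdeg_k hdeg_nk
    refine ⟨hdeg_mul, ?_⟩
    rw [coeff_eq_ite_of_natDegree_le hdeg_mul (by omega),
      coeff_mul_add_eq_of_natDegree_le hdeg_k hdeg_nk, hcoeff_k, hcoeff_nk, Nat.cast_ite,
      Nat.cast_mul, Nat.cast_zero]
  rw [hPrec n hn₁, hshift, show n + 1 + 1 = n + 2 by ring]
  constructor
  · refine natDegree_add_le_of_degree_le (hdeg_taylor.trans (by omega))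
      (natDegree_sum_le_of_forall_le _ _ fun k hk => (hprod k hk).1.trans ?_)
    rw [mem_Icc] at hk
    omega
  · rw [coeff_add, finsetSum_coeff, coeff_eq_ite_of_natDegree_le hdeg_taylor (by omega),
      coeff_taylor_of_natDegree_le _ hdeg, hcoeff, theta_succ n hn₁]
    rw [sum_congr rfl fun k hk => (hprod k hk).2]
    simp only [Nat.cast_add, Nat.cast_ite, Nat.cast_sum, Nat.cast_mul, Nat.cast_zero]

theorem leading_coeff_even_general
    (P : ℕ → Polynomial ℤ)
    (hP1 : P 1 = X)
    (hPrec : ∀ n, 1 ≤ n →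
      P (n + 1) = (P n).comp (X + 1) + ∑ k ∈ Finset.Icc 1 (n - 1), P k * P (n - k)) :
    ∀ q, 1 ≤ q → (P (2 * q)).coeff q = Nat.choose (2 * q - 1) q := by
  intro q hq
  have h := (natDegree_le_and_coeff_eq_theta P hP1 hPrec (2 * q) (by omega)).2
  rwa [show (2 * q + 1) / 2 = q by omega, theta_two_mul] at h

theorem leading_coeff_even
    (P : ℕ → Polynomial ℤ)
    (hP0 : P 0 = 0)
    (hP1 : P 1 = X)
    (hPrec : ∀ n, 1 ≤ n →
      P (n + 1) = (P n).comp (X + 1) + ∑ k ∈ Finset.Icc 1 (n - 1), P k * P (n - k)) :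
    ∀ q, 1 ≤ q → (P (2 * q)).coeff q = Nat.choose (2 * q - 1) q :=
  leading_coeff_even_general P hP1 hPrec
end

section
/- The even leading coefficients satisfy θ_{2q+2} = θ_{2q+1} + 2·Σ_{h=0}^{q} θ_{2h}·θ_{2q-2h+1} for q ≥ 0, where θ_0 = 0, θ_{2h+1} is the leading coefficient of P_{2h+1} and θ_{2h} the leading coefficient of P_{2h}. -/
open Polynomial

/-!
Both `P (2q+1)` and `P (2q+2)` have degree at most `q + 1` (more generally `deg P n ≤ ⌈n/2⌉`).
Reading the recurrence for `P (2q+2)` in degree `q + 1`, the shift `m ↦ m + 1` does not change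
the top coefficient of `P (2q+1)`, and in each product `P k * P (2q+1-k)` one factor has even and
the other odd index, so the bounds `⌈k/2⌉ + ⌈(2q+1-k)/2⌉ = q + 1` add up exactly and only the
product `θ_k θ_{2q+1-k}` survives. The resulting convolution is symmetric under `k ↦ 2q+1-k`,
which swaps the parity of `k`, so it is twice its even part.
-/

namespace Polynomial

theorem coeff_taylor_of_natDegree_le_s10 {R : Type*} [CommSemiring R] {f : R[X]} {d : ℕ} (r : R)
    (hd : f.natDegree ≤ d) : (taylor r f).coeff d = f.coeff d := by
  rcases hd.eq_or_lt with rfl | hd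
  · rw [coeff_taylor_natDegree, leadingCoeff]
  · rw [coeff_eq_zero_of_natDegree_lt hd,
      coeff_eq_zero_of_natDegree_lt (by rwa [natDegree_taylor])]

end Polynomial

theorem Finset.sum_range_two_mul {M : Type*} [AddCommMonoid M] (f : ℕ → M) (n : ℕ) :
    ∑ k ∈ range (2 * n), f k = ∑ h ∈ range n, (f (2 * h) + f (2 * h + 1)) := by
  induction n with
  | zero => simp
  | succ n ih =>
    rw [mul_add, mul_one, sum_range_succ, sum_range_succ, sum_range_succ, ih, add_assoc]

theorem Finset.sum_range_mul_reflect_eq_two_mul {R : Type*} [CommSemiring R] (a : ℕ → R)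
    (q : ℕ) :
    ∑ k ∈ range (2 * (q + 1)), a k * a (2 * q + 1 - k) =
      2 * ∑ h ∈ range (q + 1), a (2 * h) * a (2 * (q - h) + 1) := by
  have heven : ∑ h ∈ range (q + 1), a (2 * h) * a (2 * q + 1 - 2 * h) =
      ∑ h ∈ range (q + 1), a (2 * h) * a (2 * (q - h) + 1) :=
    sum_congr rfl fun h hh => by
      rw [mem_range] at hh
      rw [show 2 * q + 1 - 2 * h = 2 * (q - h) + 1 by omega]
  have hodd : ∑ h ∈ range (q + 1), a (2 * h + 1) * a (2 * q + 1 - (2 * h + 1)) =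
      ∑ h ∈ range (q + 1), a (2 * h) * a (2 * (q - h) + 1) := by
    rw [← sum_range_reflect]
    refine sum_congr rfl fun h hh => ?_
    rw [mem_range] at hh
    rw [mul_comm, show q + 1 - 1 - h = q - h by omega,
      show 2 * q + 1 - (2 * (q - h) + 1) = 2 * h by omega]
  rw [sum_range_two_mul, sum_add_distrib, heven, hodd]
  exact (two_mul _).symm

section Recurrence

variable {R : Type*} [CommSemiring R] {P : ℕ → R[X]}

def SatisfiesRecurrence (P : ℕ → R[X]) : Prop :=
  ∀ n, 1 ≤ n → P (n + 1) = (P n).comp (X + 1) + ∑ k ∈ Finset.Icc 1 (n - 1), P k * P (n - k)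

/-- The paper's `θ_n`: for odd and for even `n` alike it is the coefficient of `m ^ ⌈n/2⌉`. -/
def θ (P : ℕ → R[X]) (n : ℕ) : R := (P n).coeff ((n + 1) / 2)

theorem θ_two_mul (n : ℕ) : θ P (2 * n) = (P (2 * n)).coeff n := by
  rw [θ]; congr 1; omega

theorem θ_two_mul_add_one (n : ℕ) : θ P (2 * n + 1) = (P (2 * n + 1)).coeff (n + 1) := by
  rw [θ]; congr 1; omega

theorem natDegree_le_of_satisfiesRecurrence (hP0 : P 0 = 0) (hP1 : P 1 = X)
    (hrec : SatisfiesRecurrence P) (n : ℕ) : (P n).natDegree ≤ (n + 1) / 2 := by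
  induction n using Nat.strong_induction_on with
  | _ n ih =>
    match n with
    | 0 => simp [hP0]
    | 1 => simp [hP1, natDegree_X_le]
    | m + 2 =>
      rw [hrec (m + 1) (Nat.le_add_left 1 m)]
      refine (natDegree_add_le _ _).trans (max_le ?_ ?_)
      · have hshift : ((P (m + 1)).comp (X + 1)).natDegree = (P (m + 1)).natDegree := by
          rw [← C_1, ← taylor_apply, natDegree_taylor]
        have := ih (m + 1) (by omega)
        omega
      · refine natDegree_sum_le_of_forall_le _ _ fun k hk => natDegree_mul_le.trans ?_
        rw [Finset.mem_Icc] at hk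
        have hk' := ih k (by omega)
        have hmk := ih (m + 1 - k) (by omega)
        omega

theorem coeff_mul_eq_θ_mul_θ (hP0 : P 0 = 0) (hP1 : P 1 = X) (hrec : SatisfiesRecurrence P)
    {k l q : ℕ} (hkl : k + l = 2 * q + 1) : (P k * P l).coeff (q + 1) = θ P k * θ P l := by
  have hdeg : (k + 1) / 2 + (l + 1) / 2 = q + 1 := by omega
  rw [← hdeg]
  exact coeff_mul_add_eq_of_natDegree_le (natDegree_le_of_satisfiesRecurrence hP0 hP1 hrec k)
    (natDegree_le_of_satisfiesRecurrence hP0 hP1 hrec l)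

theorem θ_two_mul_succ_eq (hP0 : P 0 = 0) (hP1 : P 1 = X) (hrec : SatisfiesRecurrence P)
    (q : ℕ) :
    θ P (2 * (q + 1)) =
      θ P (2 * q + 1) + 2 * ∑ h ∈ Finset.range (q + 1), θ P (2 * h) * θ P (2 * (q - h) + 1) := by
  have hθ0 : θ P 0 = 0 := by simp [θ, hP0]
  have hshift : ((P (2 * q + 1)).comp (X + 1)).coeff (q + 1) = θ P (2 * q + 1) := by
    rw [← C_1, ← taylor_apply, θ_two_mul_add_one]
    refine coeff_taylor_of_natDegree_le_s10 _
      ((natDegree_le_of_satisfiesRecurrence hP0 hP1 hrec _).trans_eq ?_)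
    omega
  have hboundary : ∑ k ∈ Finset.Icc 1 (2 * q), θ P k * θ P (2 * q + 1 - k) =
      ∑ k ∈ Finset.range (2 * (q + 1)), θ P k * θ P (2 * q + 1 - k) := by
    refine Finset.sum_subset (fun k hk => ?_) fun k hk hk' => ?_
    · simp only [Finset.mem_Icc, Finset.mem_range] at hk ⊢
      omega
    · simp only [Finset.mem_Icc, Finset.mem_range] at hk hk'
      rcases Nat.eq_zero_or_pos k with rfl | hk0
      · rw [hθ0, zero_mul]
      · rw [show 2 * q + 1 - k = 0 by omega, hθ0, mul_zero]
  calc θ P (2 * (q + 1))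
      = ((P (2 * q + 1)).comp (X + 1)).coeff (q + 1) +
          ∑ k ∈ Finset.Icc 1 (2 * q), (P k * P (2 * q + 1 - k)).coeff (q + 1) := by
        rw [θ_two_mul, show 2 * (q + 1) = 2 * q + 1 + 1 by ring,
          hrec (2 * q + 1) (Nat.le_add_left 1 _), Nat.add_sub_cancel, coeff_add, finsetSum_coeff]
    _ = θ P (2 * q + 1) + ∑ k ∈ Finset.Icc 1 (2 * q), θ P k * θ P (2 * q + 1 - k) := by
        rw [hshift]
        refine congrArg _ (Finset.sum_congr rfl fun k hk => ?_)
        rw [Finset.mem_Icc] at hk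
        exact coeff_mul_eq_θ_mul_θ hP0 hP1 hrec (by omega)
    _ = _ := by rw [hboundary, Finset.sum_range_mul_reflect_eq_two_mul]

end Recurrence

theorem even_leading_coeff_recurrence
    (P : ℕ → Polynomial ℤ)
    (hP0 : P 0 = 0)
    (hP1 : P 1 = X)
    (hPrec : ∀ n, 1 ≤ n →
      P (n + 1) = (P n).comp (X + 1) + ∑ k ∈ Finset.Icc 1 (n - 1), P k * P (n - k)) :
    ∀ q : ℕ,
      (P (2 * (q + 1))).coeff (q + 1) =
        (P (2 * q + 1)).coeff (q + 1) +
          2 * ∑ h ∈ Finset.range (q + 1),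
            (P (2 * h)).coeff h * (P (2 * (q - h) + 1)).coeff (q - h + 1) := by
  intro q
  simpa only [θ_two_mul, θ_two_mul_add_one] using θ_two_mul_succ_eq hP0 hP1 hPrec q
end
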